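/- Let g be a unitary operator on H = H₊ ⊕ H₋ whose off-diagonal blocks g₊₋ = p₊ g p₋ and g₋₊ = p₋ g p₊ are Hilbert–Schmidt. Then g d g⁻¹ − d is a skew-adjoint operator whose off-diagonal blocks are Hilbert–Schmidt and whose diagonal blocks p₊(gdg⁻¹ − d)p₊ and p₋(gdg⁻¹ − d)p₋ are trace class. -/

import Mathlib

/-!
Write `q = 1 - p`. Since `d = i(2p - 1)`, we have `g d g⁻¹ - d = 2i (g p g⁻¹ - p)`, which is
skew-adjoint because `g p g⁻¹ - p` is self-adjoint. Expanding with `p² = p`, `q² = q`, `pq = qp = 0`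
and `g g⁻¹ = 1` expresses every block of `g p g⁻¹ - p` as a product of blocks of `g` and `g⁻¹`:
`p(·)q = (pgp)(pg⁻¹q)`, `q(·)p = (qgp)(pg⁻¹p)`, `p(·)p = -(pgq)(qg⁻¹p)` and `q(·)q = (qgp)(pg⁻¹q)`.
The off-diagonal blocks of `g⁻¹ = g*` are the adjoints of those of `g`, hence Hilbert–Schmidt
(swap the order of summation in `∑ᵢⱼ |⟪eⱼ, T eᵢ⟫|²`). So each off-diagonal block has a
Hilbert–Schmidt factor and each diagonal block is a product of two Hilbert–Schmidt operators.
-/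

open ContinuousLinearMap

noncomputable section

/-- `T` is a Hilbert–Schmidt operator: `∑ᵢ ‖T eᵢ‖² < ∞` for some Hilbert basis `(eᵢ)`. -/
def IsHS {H : Type*} [NormedAddCommGroup H] [InnerProductSpace ℂ H]
    (T : H →L[ℂ] H) : Prop :=
  ∃ (ι : Type) (b : HilbertBasis ι ℂ H), Summable fun i => ‖T (b i)‖ ^ 2

/-- `T` is trace class: `T` is a product of two Hilbert–Schmidt operators. -/
def IsTC {H : Type*} [NormedAddCommGroup H] [InnerProductSpace ℂ H]
    (T : H →L[ℂ] H) : Prop :=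
  ∃ A B : H →L[ℂ] H, IsHS A ∧ IsHS B ∧ T = A * B

/-- The operator `d = i(p₊ - p₋)` associated to the orthogonal projection `P = p₊`
(so `p₋ = 1 - P`). -/
def dOp {H : Type*} [NormedAddCommGroup H] [InnerProductSpace ℂ H]
    (P : H →L[ℂ] H) : H →L[ℂ] H :=
  Complex.I • (P - (1 - P))

open scoped InnerProductSpace

theorem HilbertBasis.hasSum_norm_inner_sq {ι 𝕜 E : Type*} [RCLike 𝕜] [NormedAddCommGroup E]
    [InnerProductSpace 𝕜 E] (b : HilbertBasis ι 𝕜 E) (x : E) :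
    HasSum (fun i => ‖⟪b i, x⟫_𝕜‖ ^ 2) (‖x‖ ^ 2) := by
  simpa [b.repr_apply_apply] using lp.hasSum_norm (p := 2) (by norm_num) (b.repr x)

section HilbertBasis

variable {ι κ 𝕜 E F : Type*} [RCLike 𝕜] [NormedAddCommGroup E] [InnerProductSpace 𝕜 E]
  [NormedAddCommGroup F] [InnerProductSpace 𝕜 F]

theorem HilbertBasis.summable_norm_sq_apply_iff (b : HilbertBasis ι 𝕜 E)
    (c : HilbertBasis κ 𝕜 F) (T : E →L[𝕜] F) :
    (Summable fun i => ‖T (b i)‖ ^ 2) ↔ Summable fun x : ι × κ => ‖⟪c x.2, T (b x.1)⟫_𝕜‖ ^ 2 := by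
  rw [summable_prod_of_nonneg fun _ => by positivity]
  simp only [fun i => (c.hasSum_norm_inner_sq (T (b i))).tsum_eq]
  exact ⟨fun h => ⟨fun i => (c.hasSum_norm_inner_sq _).summable, h⟩, And.right⟩

theorem HilbertBasis.summable_norm_sq_adjoint_apply [CompleteSpace E] [CompleteSpace F]
    (b : HilbertBasis ι 𝕜 E) (c : HilbertBasis κ 𝕜 F) {T : E →L[𝕜] F}
    (hT : Summable fun i => ‖T (b i)‖ ^ 2) : Summable fun k => ‖adjoint T (c k)‖ ^ 2 := by
  rw [c.summable_norm_sq_apply_iff b]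
  simpa [adjoint_inner_right, norm_inner_symm] using
    ((b.summable_norm_sq_apply_iff c T).1 hT).prod_symm

end HilbertBasis

section IsHS

variable {H : Type*} [NormedAddCommGroup H] [InnerProductSpace ℂ H] {T : H →L[ℂ] H}

theorem IsHS.mul_left (h : IsHS T) (A : H →L[ℂ] H) : IsHS (A * T) := by
  obtain ⟨ι, b, hb⟩ := h
  refine ⟨ι, b, (hb.mul_left (‖A‖ ^ 2)).of_nonneg_of_le (fun i => by positivity) fun i => ?_⟩
  rw [← mul_pow]
  gcongr
  exact A.le_opNorm _

theorem IsHS.smul (h : IsHS T) (c : ℂ) : IsHS (c • T) := by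
  simpa using h.mul_left (c • 1)

theorem IsHS.star [CompleteSpace H] (h : IsHS T) : IsHS (star T) := by
  obtain ⟨ι, b, hb⟩ := h
  exact ⟨ι, b, b.summable_norm_sq_adjoint_apply b hb⟩

theorem IsHS.mul_right [CompleteSpace H] (h : IsHS T) (A : H →L[ℂ] H) : IsHS (T * A) := by
  simpa using (h.star.mul_left (Star.star A)).star

theorem IsHS.star_mul_mul [CompleteSpace H] {p q : H →L[ℂ] H} (hp : IsSelfAdjoint p)
    (hq : IsSelfAdjoint q) (h : IsHS (p * T * q)) : IsHS (q * Star.star T * p) := by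
  simpa [hp.star_eq, hq.star_eq, mul_assoc] using h.star

theorem IsTC.smul (h : IsTC T) (c : ℂ) : IsTC (c • T) := by
  obtain ⟨A, B, hA, hB, rfl⟩ := h
  exact ⟨c • A, B, hA.smul c, hB, (smul_mul_assoc c A B).symm⟩

end IsHS

section Blocks

variable {R : Type*} [Ring R] {p g u : R}

theorem IsIdempotentElem.mul_conj_sub_self_mul (hp : IsIdempotentElem p) (a b : R) :
    a * (g * p * u - p) * b = a * g * p * (p * u * b) - a * p * b := by
  rw [show a * g * p * (p * u * b) = a * g * (p * p) * u * b by noncomm_ring, hp.eq]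
  noncomm_ring

theorem conj_one_sub_sub_one_sub (hgu : g * u = 1) :
    g * (1 - p) * u - (1 - p) = -(g * p * u - p) := by
  rw [mul_sub, sub_mul, mul_one, hgu]
  abel

theorem IsIdempotentElem.mul_conj_sub_self_mul_one_sub (hp : IsIdempotentElem p) :
    p * (g * p * u - p) * (1 - p) = p * g * p * (p * u * (1 - p)) := by
  rw [hp.mul_conj_sub_self_mul, hp.eq, hp.mul_one_sub_self, sub_zero]

theorem IsIdempotentElem.one_sub_mul_conj_sub_self_mul (hp : IsIdempotentElem p) :
    (1 - p) * (g * p * u - p) * p = (1 - p) * g * p * (p * u * p) := by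
  rw [hp.mul_conj_sub_self_mul, hp.one_sub_mul_self, zero_mul, sub_zero]

theorem IsIdempotentElem.one_sub_mul_conj_sub_self_mul_one_sub (hp : IsIdempotentElem p) :
    (1 - p) * (g * p * u - p) * (1 - p) = (1 - p) * g * p * (p * u * (1 - p)) := by
  rw [hp.mul_conj_sub_self_mul, hp.one_sub_mul_self, zero_mul, sub_zero]

theorem IsIdempotentElem.mul_conj_sub_self_mul_self (hp : IsIdempotentElem p) (hgu : g * u = 1) :
    p * (g * p * u - p) * p = -(p * g * (1 - p) * ((1 - p) * u * p)) := by
  rw [← neg_neg (g * p * u - p), ← conj_one_sub_sub_one_sub hgu, mul_neg, neg_mul,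
    hp.one_sub.mul_conj_sub_self_mul, hp.mul_one_sub_self, zero_mul, sub_zero]

end Blocks

theorem conj_dOp_sub_dOp {H : Type*} [NormedAddCommGroup H] [InnerProductSpace ℂ H]
    {P g u : H →L[ℂ] H} (hgu : g * u = 1) :
    g * dOp P * u - dOp P = (2 * Complex.I) • (g * P * u - P) := by
  simp only [dOp, mul_smul_comm, smul_mul_assoc, mul_sub, sub_mul, mul_one, hgu]
  module

/-- If `g` is a unitary with Hilbert–Schmidt off-diagonal blocks, then `gdg⁻¹ - d` is skew-adjoint
with Hilbert–Schmidt off-diagonal blocks and trace-class diagonal blocks. -/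
theorem stmt7 {H : Type*} [NormedAddCommGroup H] [InnerProductSpace ℂ H] [CompleteSpace H]
    (P : H →L[ℂ] H) (hP : IsSelfAdjoint P) (hP2 : P * P = P)
    (g : H →L[ℂ] H) (hg : g ∈ unitary (H →L[ℂ] H))
    (h1 : IsHS (P * g * (1 - P))) (h2 : IsHS ((1 - P) * g * P)) :
    ∀ X : H →L[ℂ] H, X = g * dOp P * star g - dOp P →
      star X = -X ∧
      IsHS (P * X * (1 - P)) ∧
      IsHS ((1 - P) * X * P) ∧
      IsTC (P * X * P) ∧
      IsTC ((1 - P) * X * (1 - P)) := by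
  have hgg : g * star g = 1 := Unitary.mul_star_self_of_mem hg
  have hPidem : IsIdempotentElem P := hP2
  have hQ : IsSelfAdjoint (1 - P) := (IsSelfAdjoint.one _).sub hP
  have h1' : IsHS ((1 - P) * star g * P) := h1.star_mul_mul hP hQ
  have h2' : IsHS (P * star g * (1 - P)) := h2.star_mul_mul hQ hP
  rintro X rfl
  rw [conj_dOp_sub_dOp hgg]
  simp only [mul_smul_comm, smul_mul_assoc]
  refine ⟨?_, ?_, ?_, ?_, ?_⟩
  · have hY : IsSelfAdjoint (g * P * star g - P) := (hP.conjugate g).sub hP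
    simp [star_smul, hY.star_eq]
  · rw [hPidem.mul_conj_sub_self_mul_one_sub]
    exact (h2'.mul_left _).smul _
  · rw [hPidem.one_sub_mul_conj_sub_self_mul]
    exact (h2.mul_right _).smul _
  · rw [hPidem.mul_conj_sub_self_mul_self hgg, smul_neg, ← neg_smul]
    exact IsTC.smul ⟨_, _, h1, h1', rfl⟩ _
  · rw [hPidem.one_sub_mul_conj_sub_self_mul_one_sub]
    exact IsTC.smul ⟨_, _, h2, h2', rfl⟩ _
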